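/- Consider n qubits, numbers λ_i ∈ [0,1) with W_i = (1/2)(1 + λ_i Z), reset dissipators D_i(ρ) = Tr_i(ρ) ⊗ W_i, nonnegative weights q_i with ∑_i q_i = 1, and E_0(ρ) = ∑_i q_i D_i(ρ). For a string α ∈ {0,1,2,3}^n set q_α := ∑_{i ∈ supp(α)} q_i. Then the Wauli basis diagonalizes E_0 and the dual Wauli basis diagonalizes its Hilbert–Schmidt adjoint: E_0(Q_α) = (1 − q_α)·Q_α and E_0*(Q̃_α) = (1 − q_α)·Q̃_α for every string α. -/

import Mathlib

namespace SSP

noncomputable section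

open Matrix
open scoped ComplexOrder

/-- Computational basis labels for `n` qubits. -/
abbrev Idx (n : ℕ) := Fin n → Fin 2

/-- Operators (matrices) on the Hilbert space of `n` qubits. -/
abbrev Op (n : ℕ) := Matrix (Idx n) (Idx n) ℂ

/-- Super-operators on `n` qubits. -/
abbrev SOp (n : ℕ) := Op n →ₗ[ℂ] Op n

/-- The operator norm (largest singular value) of a complex matrix. -/
noncomputable def opNorm {m : Type*} [Fintype m] [DecidableEq m]
    (M : Matrix m m ℂ) : ℝ :=
  ‖Matrix.toEuclideanCLM (𝕜 := ℂ) M‖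

/-- A density matrix: positive semidefinite with unit trace. -/
def IsDensity {n : ℕ} (ρ : Op n) : Prop := ρ.PosSemidef ∧ ρ.trace = 1

/-- An operator is supported on the set `S` of qubits if it has the form
`Ô_S ⊗ 1` on the remaining qubits. -/
def SupportedOn {n : ℕ} (S : Set (Fin n)) (M : Op n) : Prop :=
  (∀ x y : Idx n, (∃ i ∉ S, x i ≠ y i) → M x y = 0) ∧
  (∀ x y x' y' : Idx n,
      (∀ i ∈ S, x i = x' i) → (∀ i ∈ S, y i = y' i) →
      (∀ i ∉ S, x i = y i) → (∀ i ∉ S, x' i = y' i) → M x y = M x' y')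

/-- The support of an operator: the smallest set of qubits supporting it
(the intersection of all supporting sets). -/
def suppOp {n : ℕ} (M : Op n) : Set (Fin n) :=
  {i | ∀ S : Set (Fin n), SupportedOn S M → i ∈ S}

/-- `E` is a quantum channel (CPTP map) acting only on the qubits in `S`:
it has a Kraus representation whose Kraus operators are all supported on `S`. -/
def IsChannelOn {n : ℕ} (S : Set (Fin n)) (E : SOp n) : Prop :=
  ∃ (m : ℕ) (F : Fin m → Op n),
    (∀ j, SupportedOn S (F j)) ∧
    (∑ j, (F j)ᴴ * F j = 1) ∧
    (∀ ρ, E ρ = ∑ j, F j * ρ * (F j)ᴴ)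

/-- A quantum channel on the whole system. -/
def IsChannel {n : ℕ} (E : SOp n) : Prop := IsChannelOn Set.univ E

/-- `Estar` is the adjoint of `E` with respect to the Hilbert–Schmidt
inner product `⟨A,B⟩ = Tr(A†B)`. -/
def IsHSAdjoint {n : ℕ} (E Estar : SOp n) : Prop :=
  ∀ A B : Op n, ((Estar A)ᴴ * B).trace = (Aᴴ * (E B)).trace

/-- An ergodic channel: it has a unique fixed point among density matrices,
this fixed point is full rank (positive definite), and there is no other
eigenvalue of modulus one. -/
def IsErgodic {n : ℕ} (E : SOp n) : Prop :=
  (∃ σ : Op n, IsDensity σ ∧ σ.PosDef ∧ E σ = σ ∧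
      ∀ ρ : Op n, IsDensity ρ → E ρ = ρ → ρ = σ) ∧
  (∀ μ : ℂ, Module.End.HasEigenvalue (E : Module.End ℂ (Op n)) μ → μ = 1 ∨ ‖μ‖ < 1)

/-- The set of qubits (endpoints) of an edge. -/
def edgeQubits {n : ℕ} (e : Sym2 (Fin n)) : Set (Fin n) := {i | i ∈ e}

/-- Finset of endpoints of an edge. -/
def edgeFinset' {n : ℕ} (e : Sym2 (Fin n)) : Finset (Fin n) :=
  Finset.univ.filter (· ∈ e)

/-- A Hamiltonian is geometrically `k`-local w.r.t. the graph `G`: it is a sum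
of Hermitian terms, each supported on a connected subset of `G` with at most
`k` vertices. -/
def GeomLocal {n : ℕ} (G : SimpleGraph (Fin n)) (k : ℕ) (H : Op n) : Prop :=
  ∃ (m : ℕ) (h : Fin m → Op n) (S : Fin m → Set (Fin n)),
    H = ∑ j, h j ∧
    ∀ j, (h j).IsHermitian ∧ SupportedOn (S j) (h j) ∧
      (S j).ncard ≤ k ∧ (G.induce (S j)).Preconnected

/-- The ball of radius `k` around a set of vertices, in the graph metric. -/
def Ball {n : ℕ} (G : SimpleGraph (Fin n)) (X : Set (Fin n)) (k : ℕ) :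
    Set (Fin n) :=
  {v | ∃ u ∈ X, ∃ w : G.Walk u v, w.length ≤ k}

/- Pauli matrices and the Wauli bases. -/
def PX : Matrix (Fin 2) (Fin 2) ℂ := !![0, 1; 1, 0]
def PY : Matrix (Fin 2) (Fin 2) ℂ := !![0, -Complex.I; Complex.I, 0]
def PZ : Matrix (Fin 2) (Fin 2) ℂ := !![1, 0; 0, -1]

/-- `W = (1/2)(1 + λ Z)`. -/
noncomputable def Wmat (l : ℝ) : Matrix (Fin 2) (Fin 2) ℂ :=
  (2⁻¹ : ℂ) • (1 + (l : ℂ) • PZ)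

/-- Single-qubit Wauli basis `{W, X/2, Y/2, Z/2}`. -/
noncomputable def wauli (l : ℝ) : Fin 4 → Matrix (Fin 2) (Fin 2) ℂ :=
  ![Wmat l, (2⁻¹ : ℂ) • PX, (2⁻¹ : ℂ) • PY, (2⁻¹ : ℂ) • PZ]

/-- Single-qubit dual Wauli basis `{1, X, Y, Z - λ·1}`. -/
noncomputable def dualWauli (l : ℝ) : Fin 4 → Matrix (Fin 2) (Fin 2) ℂ :=
  ![1, PX, PY, PZ - (l : ℂ) • 1]

/-- The `n`-qubit Wauli basis element `Q_α` (tensor product of the `Q_{α_i}`). -/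
noncomputable def Qmat {n : ℕ} (lam : Fin n → ℝ) (α : Fin n → Fin 4) : Op n :=
  Matrix.of fun x y => ∏ i, wauli (lam i) (α i) (x i) (y i)

/-- The `n`-qubit dual Wauli basis element `Q̃_α`. -/
noncomputable def Qdual {n : ℕ} (lam : Fin n → ℝ) (α : Fin n → Fin 4) : Op n :=
  Matrix.of fun x y => ∏ i, dualWauli (lam i) (α i) (x i) (y i)

/-- The support of a Wauli string. -/
def suppStr {n : ℕ} (α : Fin n → Fin 4) : Finset (Fin n) :=
  Finset.univ.filter (fun i => α i ≠ 0)

/-- The coefficient `c_α = Tr(Q_α O)` of the expansion `O = ∑_α c_α Q̃_α`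
in the dual Wauli basis. -/
noncomputable def QCoeff {n : ℕ} (lam : Fin n → ℝ) (O : Op n)
    (α : Fin n → Fin 4) : ℂ :=
  (Qmat lam α * O).trace

/-- The `Q1` norm: the `ℓ¹` norm of the dual-Wauli coefficient vector. -/
noncomputable def Q1Norm {n : ℕ} (lam : Fin n → ℝ) (O : Op n) : ℝ :=
  ∑ α : Fin n → Fin 4, ‖QCoeff lam O α‖

/-- The subspace `S_k`: the span of the dual Wauli operators `Q̃_α` with
`|α| ≤ k`. -/
def Sk {n : ℕ} (lam : Fin n → ℝ) (k : ℕ) : Submodule ℂ (Op n) :=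
  Submodule.span ℂ {Q | ∃ α : Fin n → Fin 4, (suppStr α).card ≤ k ∧ Q = Qdual lam α}

/-- The trace norm `Tr √(O†O)` of a matrix. -/
noncomputable def traceNorm {m : Type*} [Fintype m] [DecidableEq m]
    (M : Matrix m m ℂ) : ℝ :=
  ((((Matrix.posSemidef_conjTranspose_mul_self M).1.eigenvectorUnitary : Matrix m m ℂ) *
      diagonal ((fun x : ℝ => ((√x : ℝ) : ℂ)) ∘ (Matrix.posSemidef_conjTranspose_mul_self M).1.eigenvalues) *
      star ((Matrix.posSemidef_conjTranspose_mul_self M).1.eigenvectorUnitary : Matrix m m ℂ)).trace).re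

/-!
`Q_α` and `Q̃_α` are tensor products, and `D_i` maps a tensor product `⨂ⱼ Aⱼ` to
`Tr(A_i) • (⨂ⱼ Aⱼ with A_i replaced by W_i)`. Since `Tr Q_k = δ_{k0}` and `Q_0 = W`, this gives
`D_i Q_α = δ_{α_i,0} Q_α`. For the adjoint it suffices to pair `Q̃_α` with the matrix units, which
are tensor products as well; then `⟨Q̃_α, D_i B⟩ = Tr(B_i) ⟨Q̃_{α_i}, W_i⟩ ∏_{j ≠ i} ⟨Q̃_{α_j}, B_j⟩`,
and `⟨Q̃_k, W⟩ = δ_{k0}` together with `Q̃_0 = 1` turns this into `δ_{α_i,0} ⟨Q̃_α, B⟩`.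
-/

section PiKronecker

variable {ι d R : Type*} [Fintype ι] [CommSemiring R]

def piKronecker (A : ι → Matrix d d R) : Matrix (ι → d) (ι → d) R :=
  Matrix.of fun x y => ∏ i, A i (x i) (y i)

theorem piKronecker_mul [DecidableEq ι] [Fintype d] (A B : ι → Matrix d d R) :
    piKronecker A * piKronecker B = piKronecker fun i => A i * B i := by
  ext x y
  simp only [piKronecker, mul_apply, of_apply, Finset.prod_univ_sum, Fintype.piFinset_univ,
    Finset.prod_mul_distrib]

theorem trace_piKronecker [DecidableEq ι] [Fintype d] (A : ι → Matrix d d R) :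
    (piKronecker A).trace = ∏ i, (A i).trace := by
  simp only [trace, diag, piKronecker, of_apply, Finset.prod_univ_sum, Fintype.piFinset_univ]

theorem conjTranspose_piKronecker [StarRing R] (A : ι → Matrix d d R) :
    (piKronecker A)ᴴ = piKronecker fun i => (A i)ᴴ := by
  ext x y
  simp [piKronecker, star_prod]

theorem single_one_eq_piKronecker [DecidableEq ι] [DecidableEq d] (x y : ι → d) :
    single x y (1 : R) = piKronecker fun i => single (x i) (y i) 1 := by
  ext x' y'
  simp [piKronecker, single_apply, Finset.prod_ite_zero, funext_iff, forall_and]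

/-- `Tr_i(ρ) ⊗ W`, with `W` placed on site `i`. -/
def resetAt [DecidableEq ι] [Fintype d] (i : ι) (W : Matrix d d R)
    (ρ : Matrix (ι → d) (ι → d) R) : Matrix (ι → d) (ι → d) R :=
  Matrix.of fun x y => (∑ b, ρ (Function.update x i b) (Function.update y i b)) * W (x i) (y i)

theorem resetAt_piKronecker [DecidableEq ι] [Fintype d] (i : ι) (W : Matrix d d R)
    (A : ι → Matrix d d R) :
    resetAt i W (piKronecker A) = (A i).trace • piKronecker (Function.update A i W) := by
  ext x y
  simp only [resetAt, piKronecker, of_apply, Matrix.smul_apply, smul_eq_mul, trace, diag,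
    Fintype.prod_eq_mul_prod_compl i, Function.update_self, Finset.sum_mul]
  have h_off (b : d) : ∏ j ∈ {i}ᶜ, A j (Function.update x i b j) (Function.update y i b j) =
      ∏ j ∈ {i}ᶜ, Function.update A i W j (x j) (y j) :=
    Finset.prod_congr rfl fun j hj => by
      rw [Finset.mem_compl, Finset.mem_singleton] at hj
      simp only [Function.update_of_ne hj]
  simp only [h_off]
  exact Finset.sum_congr rfl fun b _ => by ring

theorem trace_conjTranspose_piKronecker_mul [StarRing R] [DecidableEq ι] [Fintype d]
    (A B : ι → Matrix d d R) :
    ((piKronecker A)ᴴ * piKronecker B).trace = ∏ i, ((A i)ᴴ * B i).trace := by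
  rw [conjTranspose_piKronecker, piKronecker_mul, trace_piKronecker]

end PiKronecker

theorem eq_of_forall_trace_conjTranspose_mul_single {m R : Type*} [Fintype m] [DecidableEq m]
    [Semiring R] [StarRing R] {M N : Matrix m m R}
    (h : ∀ x y, (Mᴴ * single x y 1).trace = (Nᴴ * single x y 1).trace) : M = N := by
  ext x y
  simpa [trace_mul_single] using h x y

theorem trace_wauli (l : ℝ) (k : Fin 4) : (wauli l k).trace = if k = 0 then 1 else 0 := by
  fin_cases k <;> simp [wauli, Wmat, PX, PY, PZ, trace_fin_two]

theorem trace_conjTranspose_dualWauli_mul_Wmat (l : ℝ) (k : Fin 4) :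
    ((dualWauli l k)ᴴ * Wmat l).trace = if k = 0 then 1 else 0 := by
  fin_cases k <;>
    simp [dualWauli, Wmat, PX, PY, PZ, trace_fin_two, mul_apply, one_apply, Fin.sum_univ_two]
  ring

theorem resetAt_Qmat {n : ℕ} (lam : Fin n → ℝ) (α : Fin n → Fin 4) (i : Fin n) :
    resetAt i (Wmat (lam i)) (Qmat lam α) = if α i = 0 then Qmat lam α else 0 := by
  rw [Qmat, ← piKronecker, resetAt_piKronecker, trace_wauli]
  split_ifs with h
  · rw [one_smul, Function.update_eq_self_iff.mpr (by rw [h]; rfl)]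
  · rw [zero_smul]

theorem trace_conjTranspose_Qdual_mul_resetAt {n : ℕ} (lam : Fin n → ℝ) (α : Fin n → Fin 4)
    (i : Fin n) (S : Fin n → Matrix (Fin 2) (Fin 2) ℂ) :
    ((Qdual lam α)ᴴ * resetAt i (Wmat (lam i)) (piKronecker S)).trace =
      (if α i = 0 then 1 else 0) * ((Qdual lam α)ᴴ * piKronecker S).trace := by
  have h_off :
      ∏ j ∈ {i}ᶜ, ((dualWauli (lam j) (α j))ᴴ * Function.update S i (Wmat (lam i)) j).trace =
        ∏ j ∈ {i}ᶜ, ((dualWauli (lam j) (α j))ᴴ * S j).trace :=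
    Finset.prod_congr rfl fun j hj => by
      rw [Finset.mem_compl, Finset.mem_singleton] at hj
      rw [Function.update_of_ne hj]
  rw [Qdual, ← piKronecker, resetAt_piKronecker, Matrix.mul_smul, trace_smul,
    trace_conjTranspose_piKronecker_mul, trace_conjTranspose_piKronecker_mul,
    Fintype.prod_eq_mul_prod_compl i, Fintype.prod_eq_mul_prod_compl i, Function.update_self,
    h_off, trace_conjTranspose_dualWauli_mul_Wmat]
  split_ifs with h
  · simp [h, dualWauli]
  · simp

theorem sum_filter_eq_zero_eq_one_sub {n : ℕ} (q : Fin n → ℝ) (hq : ∑ i, q i = 1)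
    (α : Fin n → Fin 4) :
    ∑ i with α i = 0, q i = 1 - ∑ i ∈ suppStr α, q i := by
  rw [← hq, ← Finset.sum_filter_add_sum_filter_not Finset.univ (α · = 0), suppStr]
  ring

theorem wauli_diagonalizes_E0_general {n : ℕ} (lam : Fin n → ℝ)
    (q : Fin n → ℝ) (hqsum : ∑ i, q i = 1)
    (D : Fin n → SOp n)
    (hD : ∀ i (ρ : Op n), D i ρ = Matrix.of fun x y =>
      (∑ b : Fin 2, ρ (Function.update x i b) (Function.update y i b)) *
        Wmat (lam i) (x i) (y i))
    (E0 E0star : SOp n)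
    (hE0 : ∀ ρ : Op n, E0 ρ = ∑ i, q i • D i ρ)
    (hadj : IsHSAdjoint E0 E0star) :
    ∀ α : Fin n → Fin 4,
      E0 (Qmat lam α) = (1 - ∑ i ∈ suppStr α, q i : ℝ) • Qmat lam α ∧
      E0star (Qdual lam α) = (1 - ∑ i ∈ suppStr α, q i : ℝ) • Qdual lam α := by
  intro α
  have hD_reset : ∀ i ρ, D i ρ = resetAt i (Wmat (lam i)) ρ := hD
  rw [← sum_filter_eq_zero_eq_one_sub q hqsum α]
  constructor
  · simp only [hE0, hD_reset, resetAt_Qmat, smul_ite, smul_zero, Finset.sum_ite,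
      Finset.sum_const_zero, add_zero, Finset.sum_smul]
  · refine eq_of_forall_trace_conjTranspose_mul_single fun x y => ?_
    rw [hadj, hE0, single_one_eq_piKronecker, Matrix.mul_sum, trace_sum]
    simp only [Matrix.mul_smul, trace_smul, hD_reset, trace_conjTranspose_Qdual_mul_resetAt]
    rw [conjTranspose_smul, star_trivial, Matrix.smul_mul, trace_smul, Finset.sum_filter,
      Finset.sum_smul]
    refine Finset.sum_congr rfl fun i _ => ?_
    split_ifs <;> simp

/-- the Wauli basis diagonalizes `E₀ = ∑ᵢ qᵢ Dᵢ` and the dual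
Wauli basis diagonalizes its Hilbert–Schmidt adjoint, with eigenvalues
`1 - q_α`. -/
theorem wauli_diagonalizes_E0 {n : ℕ} (lam : Fin n → ℝ)
    (hlam : ∀ i, 0 ≤ lam i ∧ lam i < 1)
    (q : Fin n → ℝ) (hq0 : ∀ i, 0 ≤ q i) (hqsum : ∑ i, q i = 1)
    (D : Fin n → SOp n)
    (hD : ∀ i (ρ : Op n), D i ρ = Matrix.of fun x y =>
      (∑ b : Fin 2, ρ (Function.update x i b) (Function.update y i b)) *
        Wmat (lam i) (x i) (y i))
    (E0 E0star : SOp n)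
    (hE0 : ∀ ρ : Op n, E0 ρ = ∑ i, q i • D i ρ)
    (hadj : IsHSAdjoint E0 E0star) :
    ∀ α : Fin n → Fin 4,
      E0 (Qmat lam α) = (1 - ∑ i ∈ suppStr α, q i : ℝ) • Qmat lam α ∧
      E0star (Qdual lam α) = (1 - ∑ i ∈ suppStr α, q i : ℝ) • Qdual lam α :=
  wauli_diagonalizes_E0_general lam q hqsum D hD E0 E0star hE0 hadj

end

end SSP
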